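/- Let φ be a flow, and let z* be a periodic point with minimal positive period T(z*) (i.e. φ(T(z*), z*) = z* and no s with 0 < s < T(z*) satisfies φ(s, z*) = z*). Let σ be an involution on the orbit γ of z* (σ∘σ = id on γ) satisfying the symmetry relation σ(φ(t,z)) = φ(t, σ(z)) for all t and all z ∈ γ, and suppose σ(γ) ⊆ γ. Then for every z ∈ γ, either σ(z) = z or σ(z) = φ(T(z*)/2, z). -/

import Mathlib

/-!
Let the flow act on `α` as an additive action of `ℝ`. Minimality of `T` makes the stabilizer
of `z*` equal to `Tℤ`. Write `σ z* = φ a z*`; then `z* = σ (σ z*) = φ (2a) z*`, so `2a ∈ Tℤ`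
and `a ≡ 0` or `a ≡ T/2` modulo `T`. Because `σ` commutes with the flow, it acts on the whole
orbit as the same time shift `φ a`.
-/

open AddAction

theorem AddAction.stabilizer_eq_zmultiples_of_minimal_period {G α : Type*} [AddCommGroup G]
    [LinearOrder G] [IsOrderedAddMonoid G] [Archimedean G] [AddAction G α] {z : α} {T : G}
    (hT : 0 < T) (hper : T +ᵥ z = z) (hmin : ∀ s : G, 0 < s → s < T → s +ᵥ z ≠ z) :
    stabilizer G z = AddSubgroup.zmultiples T := by
  rw [AddSubgroup.zmultiples_eq_closure]
  refine AddSubgroup.cyclic_of_min ⟨⟨hper, hT⟩, fun s ⟨hs, hs0⟩ => ?_⟩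
  by_contra! hsT
  exact hmin s hs0 hsT hs

theorem AddAction.vadd_eq_self_or_eq_half_vadd_of_add_self_vadd_eq_self {R α : Type*}
    [DivisionRing R] [CharZero R] [AddAction R α] {z : α} {T a : R}
    (hstab : stabilizer R z = AddSubgroup.zmultiples T) (ha : (a + a) +ᵥ z = z) :
    a +ᵥ z = z ∨ a +ᵥ z = (T / 2) +ᵥ z := by
  have h2a : 2 • a ∈ AddSubgroup.zmultiples T := by rwa [two_nsmul, ← hstab]
  obtain ⟨k, hk⟩ := (AddSubgroup.nsmul_mem_zmultiples_iff_exists_sub_div two_ne_zero).mp h2a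
  rw [← hstab, mem_stabilizer_iff] at hk
  fin_cases k
  · left
    simpa using hk
  · right
    simp only [one_smul, Nat.cast_ofNat] at hk
    conv_rhs => rw [← hk, vadd_vadd, add_sub_cancel]

theorem AddAction.eq_vadd_on_orbit_of_commute {G α : Type*} [AddCommMonoid G] [AddAction G α]
    {σ : α → α} {z : α} {c : G} (hsym : ∀ t : G, σ (t +ᵥ z) = t +ᵥ σ z) (hc : σ z = c +ᵥ z) :
    ∀ w ∈ orbit G z, σ w = c +ᵥ w := by
  rintro _ ⟨t, rfl⟩
  rw [hsym, hc, vadd_vadd, add_comm, ← vadd_vadd]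

/-- An involution `σ` of the orbit `γ` of a point `z*` with minimal
positive period `T`, which is a symmetry of the flow on `γ` and maps `γ` into `γ`,
satisfies at each point of `γ`: either `σ z = z` or `σ z = φ (T / 2) z`. -/
theorem symmetric_involution_on_cycle_dichotomy {α : Type*} (φ : ℝ → α → α)
    (σ : α → α) (zs : α) (T : ℝ)
    (hφ0 : ∀ z, φ 0 z = z)
    (hφadd : ∀ s t z, φ (s + t) z = φ s (φ t z))
    (hTpos : 0 < T)
    (hper : φ T zs = zs)
    (hmin : ∀ s : ℝ, 0 < s → s < T → φ s zs ≠ zs)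
    (hmaps : ∀ z ∈ {w : α | ∃ t : ℝ, w = φ t zs}, σ z ∈ {w : α | ∃ t : ℝ, w = φ t zs})
    (hinv : ∀ z ∈ {w : α | ∃ t : ℝ, w = φ t zs}, σ (σ z) = z)
    (hsym : ∀ (t : ℝ), ∀ z ∈ {w : α | ∃ s : ℝ, w = φ s zs}, σ (φ t z) = φ t (σ z)) :
    ∀ z ∈ {w : α | ∃ t : ℝ, w = φ t zs}, σ z = z ∨ σ z = φ (T / 2) z := by
  let _ : AddAction ℝ α := { vadd := φ, zero_vadd := hφ0, add_vadd := hφadd }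
  have horbit : {w : α | ∃ t : ℝ, w = φ t zs} = orbit ℝ zs := by
    ext w
    exact exists_congr fun t => eq_comm
  rw [horbit] at hmaps hinv hsym ⊢
  have hzs : zs ∈ orbit ℝ zs := mem_orbit_self zs
  have hsym_zs : ∀ t : ℝ, σ (t +ᵥ zs) = t +ᵥ σ zs := fun t => hsym t zs hzs
  obtain ⟨a, ha : a +ᵥ zs = σ zs⟩ := hmaps zs hzs
  have h2a : (a + a) +ᵥ zs = zs := by
    rw [add_vadd, ha, ← hsym_zs, ha, hinv zs hzs]
  have hstab := stabilizer_eq_zmultiples_of_minimal_period hTpos hper hmin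
  rcases vadd_eq_self_or_eq_half_vadd_of_add_self_vadd_eq_self hstab h2a with h | h
  · refine fun w hw => Or.inl ?_
    rw [eq_vadd_on_orbit_of_commute hsym_zs (ha.symm.trans (h.trans (zero_vadd ℝ zs).symm)) w hw,
      zero_vadd]
  · exact fun w hw => Or.inr (eq_vadd_on_orbit_of_commute hsym_zs (ha.symm.trans h) w hw)
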